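/- arXiv:math/0410423 — 4 statements merged into one kernel-verified Lean document; each statement's English description precedes it below -/
import Mathlib

section
/- Let m ≥ 3 and let d_1, …, d_m be positive integers. There exists an exact sequence of finite-dimensional vector spaces 0 → V_1 → V_2 → ⋯ → V_m → 0 over a field k with dim V_i = d_i for all i if and only if: (i) Σ_{j even} d_j = Σ_{j odd} d_j, and (ii) for every i with 1 ≤ i ≤ m−1, the alternating partial sum Σ_{j=1}^{i} (−1)^{i+j} d_j is nonnegative. -/
/-- The linear map `K^a → K^b` sending `x` to `(x_{a-r+1}, …, x_a, 0, …, 0)`: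
it projects onto the last `r` coordinates and embeds them as the first `r`
coordinates of the target. -/
def shiftMap (K : Type*) [Field K] (a b r : ℕ) : (Fin a → K) →ₗ[K] (Fin b → K) where
  toFun x k := if h : (k : ℕ) + (a - r) < a then x ⟨(k : ℕ) + (a - r), h⟩ else 0
  map_add' x y := by ext k; by_cases h : (k : ℕ) + (a - r) < a <;> simp [h]
  map_smul' c x := by ext k; by_cases h : (k : ℕ) + (a - r) < a <;> simp [h]

lemma shiftMap_mem_range {K : Type*} [Field K] {a b r : ℕ} (hra : r ≤ a) (hrb : r ≤ b)
    (y : Fin b → K) :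
    y ∈ LinearMap.range (shiftMap K a b r) ↔ ∀ k : Fin b, r ≤ (k : ℕ) → y k = 0 := by
  constructor
  · rintro ⟨x, rfl⟩ k hk
    simp only [shiftMap, LinearMap.coe_mk, AddHom.coe_mk]
    rw [dif_neg]; omega
  · intro h
    refine ⟨fun j => if hj : (j : ℕ) - (a - r) < b then y ⟨(j : ℕ) - (a - r), hj⟩ else 0, ?_⟩
    ext k
    simp only [shiftMap, LinearMap.coe_mk, AddHom.coe_mk]
    by_cases hk : (k : ℕ) + (a - r) < a
    · rw [dif_pos hk, dif_pos (show (k : ℕ) + (a - r) - (a - r) < b by omega)]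
      congr 1
      ext
      simp only [Fin.val_mk]
      omega
    · rw [dif_neg hk]
      exact (h k (by omega)).symm

lemma shiftMap_mem_ker {K : Type*} [Field K] {a b r : ℕ} (hra : r ≤ a) (hrb : r ≤ b)
    (x : Fin a → K) :
    x ∈ LinearMap.ker (shiftMap K a b r) ↔ ∀ j : Fin a, a - r ≤ (j : ℕ) → x j = 0 := by
  rw [LinearMap.mem_ker]
  constructor
  · intro hx j hj
    have hjb : (j : ℕ) - (a - r) < b := by have := j.isLt; omega
    have := congrFun hx ⟨(j : ℕ) - (a - r), hjb⟩
    simp only [shiftMap, LinearMap.coe_mk, AddHom.coe_mk, Pi.zero_apply] at this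
    rw [dif_pos (show ((j : ℕ) - (a - r)) + (a - r) < a by have := j.isLt; omega)] at this
    rw [← this]
    congr 1
    ext
    simp only [Fin.val_mk]
    omega
  · intro h
    ext k
    simp only [shiftMap, LinearMap.coe_mk, AddHom.coe_mk, Pi.zero_apply]
    split
    · exact h _ (by simp only [Fin.val_mk]; omega)
    · rfl

lemma shiftMap_injective {K : Type*} [Field K] {a b : ℕ} (hab : a ≤ b) :
    Function.Injective (shiftMap K a b a) := by
  rw [← LinearMap.ker_eq_bot, eq_bot_iff]
  intro x hx
  have := (shiftMap_mem_ker le_rfl hab x).mp hx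
  simp only [Submodule.mem_bot]
  ext j
  exact this j (by omega)

lemma shiftMap_surjective {K : Type*} [Field K] {a b : ℕ} (hba : b ≤ a) :
    Function.Surjective (shiftMap K a b b) := by
  intro y
  exact (shiftMap_mem_range hba le_rfl y).mpr (fun k hk => absurd k.isLt (by omega))

/-- The alternating partial sum `Σ_{j=1}^{i} (−1)^{i+j} d j`. -/
def altS (d : ℕ → ℕ) (i : ℕ) : ℤ := ∑ j ∈ Finset.Icc 1 i, (-1 : ℤ) ^ (i + j) * (d j : ℤ)

lemma altS_one (d : ℕ → ℕ) : altS d 1 = d 1 := by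
  simp [altS]

lemma altS_succ (d : ℕ → ℕ) (i : ℕ) : altS d (i + 1) = (d (i + 1) : ℤ) - altS d i := by
  unfold altS
  rw [Finset.sum_Icc_succ_top (by omega : 1 ≤ i + 1)]
  rw [Finset.sum_congr rfl (fun j _ =>
    show (-1 : ℤ) ^ (i + 1 + j) * d j = -((-1 : ℤ) ^ (i + j) * d j) by
      rw [show i + 1 + j = (i + j) + 1 by ring, pow_succ]; ring)]
  rw [Finset.sum_neg_distrib, Even.neg_one_pow (⟨i + 1, by ring⟩ : Even (i + 1 + (i + 1)))]
  ring

lemma altS_total (d : ℕ → ℕ) (t : ℕ) :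
    (-1 : ℤ) ^ t * (∑ j ∈ Finset.Icc 1 (t + 1), (-1 : ℤ) ^ j * (d j : ℤ)) =
      altS d t - d (t + 1) := by
  rw [Finset.sum_Icc_succ_top (by omega : 1 ≤ t + 1), mul_add, Finset.mul_sum]
  have h1 : ∑ j ∈ Finset.Icc 1 t, (-1 : ℤ) ^ t * ((-1 : ℤ) ^ j * (d j : ℤ)) = altS d t :=
    Finset.sum_congr rfl (fun j _ => by rw [← mul_assoc, ← pow_add])
  have h2 : (-1 : ℤ) ^ t * ((-1 : ℤ) ^ (t + 1) * (d (t + 1) : ℤ)) = -(d (t + 1) : ℤ) := by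
    rw [← mul_assoc, ← pow_add, Odd.neg_one_pow (⟨t, by ring⟩ : Odd (t + (t + 1)))]
    ring
  rw [h1, h2]
  ring

lemma parity_sum (d : ℕ → ℕ) (m : ℕ) :
    (∑ j ∈ Finset.Icc 1 m, (-1 : ℤ) ^ j * (d j : ℤ)) =
      (∑ j ∈ (Finset.Icc 1 m).filter (fun j => Even j), (d j : ℤ)) -
        ∑ j ∈ (Finset.Icc 1 m).filter (fun j => ¬ Even j), (d j : ℤ) := by
  rw [← Finset.sum_filter_add_sum_filter_not (Finset.Icc 1 m) (fun j => Even j)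
    (fun j => (-1 : ℤ) ^ j * (d j : ℤ))]
  have h1 : ∑ j ∈ (Finset.Icc 1 m).filter (fun j => Even j), (-1 : ℤ) ^ j * (d j : ℤ) =
      ∑ j ∈ (Finset.Icc 1 m).filter (fun j => Even j), (d j : ℤ) :=
    Finset.sum_congr rfl (fun j hj => by
      rw [Even.neg_one_pow (Finset.mem_filter.mp hj).2, one_mul])
  have h2 : ∑ j ∈ (Finset.Icc 1 m).filter (fun j => ¬ Even j), (-1 : ℤ) ^ j * (d j : ℤ) =
      ∑ j ∈ (Finset.Icc 1 m).filter (fun j => ¬ Even j), -(d j : ℤ) :=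
    Finset.sum_congr rfl (fun j hj => by
      rw [Odd.neg_one_pow (Nat.not_even_iff_odd.mp (Finset.mem_filter.mp hj).2)]; ring)
  rw [h1, h2, Finset.sum_neg_distrib]
  ring

/-- For `m ≥ 3` and positive integers `d 1, …, d m`, there is an exact sequence of
finite-dimensional `K`-vector spaces `0 → V 1 → V 2 → ⋯ → V m → 0` with
`dim (V i) = d i` if and only if `Σ_{j even} d j = Σ_{j odd} d j` and every
alternating partial sum `Σ_{j=1}^{i} (−1)^{i+j} d j` (for `1 ≤ i ≤ m−1`) is
nonnegative. -/
theorem exact_sequence_of_vector_spaces_iff (K : Type*) [Field K]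
    (m : ℕ) (hm : 3 ≤ m) (d : ℕ → ℕ) (hd : ∀ i, 1 ≤ i → i ≤ m → 0 < d i) :
    (∃ f : (i : ℕ) → ((Fin (d i) → K) →ₗ[K] (Fin (d (i + 1)) → K)),
        Function.Injective (f 1) ∧ Function.Surjective (f (m - 1)) ∧
        ∀ i, 1 ≤ i → i ≤ m - 2 → LinearMap.range (f i) = LinearMap.ker (f (i + 1)))
      ↔
    ((∑ j ∈ (Finset.Icc 1 m).filter (fun j => Even j), d j =
        ∑ j ∈ (Finset.Icc 1 m).filter (fun j => ¬ Even j), d j) ∧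
      ∀ i, 1 ≤ i → i ≤ m - 1 →
        0 ≤ ∑ j ∈ Finset.Icc 1 i, (-1 : ℤ) ^ (i + j) * (d j : ℤ)) := by
  constructor
  · rintro ⟨f, hinj, hsurj, hex⟩
    have key : ∀ i, 1 ≤ i → i ≤ m - 1 →
        (Module.finrank K (LinearMap.range (f i)) : ℤ) = altS d i := by
      intro i
      induction i with
      | zero => omega
      | succ n ih =>
        intro _ hle
        rcases Nat.eq_zero_or_pos n with hn | hn
        · subst hn
          rw [LinearMap.finrank_range_of_inj hinj, Module.finrank_fin_fun, altS_one]
        · have h1 : LinearMap.range (f n) = LinearMap.ker (f (n + 1)) := hex n hn (by omega)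
          have h2 := LinearMap.finrank_range_add_finrank_ker (f (n + 1))
          rw [Module.finrank_fin_fun, ← h1] at h2
          have h3 := ih hn (by omega)
          rw [altS_succ]
          omega
    refine ⟨?_, fun i h1 h2 =>
      le_of_le_of_eq (Int.natCast_nonneg _) (key i h1 h2)⟩
    have hm1 : m - 1 + 1 = m := by omega
    have hr : (Module.finrank K (LinearMap.range (f (m - 1))) : ℤ) = d m := by
      rw [LinearMap.range_eq_top.mpr hsurj, finrank_top, Module.finrank_fin_fun, hm1]
    have h5 : altS d (m - 1) = d m := by rw [← key (m - 1) (by omega) le_rfl, hr]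
    have h6 := altS_total d (m - 1)
    rw [hm1, parity_sum, h5, sub_self] at h6
    have h8 : (∑ j ∈ (Finset.Icc 1 m).filter (fun j => Even j), (d j : ℤ)) -
        ∑ j ∈ (Finset.Icc 1 m).filter (fun j => ¬ Even j), (d j : ℤ) = 0 :=
      (mul_eq_zero.mp h6).resolve_left (pow_ne_zero _ (by norm_num))
    exact_mod_cast sub_eq_zero.mp h8
  · rintro ⟨hsum, hpos⟩
    have hpos' : ∀ i, 1 ≤ i → i ≤ m - 1 → 0 ≤ altS d i := hpos
    set n : ℕ → ℕ := fun i => (altS d i).toNat with hndef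
    have hn : ∀ i, 1 ≤ i → i ≤ m - 1 → (n i : ℤ) = altS d i := fun i h1 h2 =>
      Int.toNat_of_nonneg (hpos' i h1 h2)
    have hn1 : n 1 = d 1 := by simp [hndef, altS_one]
    have hrec : ∀ i, 1 ≤ i → i ≤ m - 2 → n i + n (i + 1) = d (i + 1) := by
      intro i h1 h2
      have e1 := hn i h1 (by omega)
      have e2 := hn (i + 1) (by omega) (by omega)
      have e3 := altS_succ d i
      omega
    have hlast : n (m - 1) = d m := by
      have hm1 : m - 1 + 1 = m := by omega
      have h6 := altS_total d (m - 1)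
      rw [hm1, parity_sum] at h6
      have hc : (∑ j ∈ (Finset.Icc 1 m).filter (fun j => Even j), (d j : ℤ)) =
          ∑ j ∈ (Finset.Icc 1 m).filter (fun j => ¬ Even j), (d j : ℤ) := by
        exact_mod_cast hsum
      rw [hc, sub_self, mul_zero] at h6
      have := hn (m - 1) (by omega) le_rfl
      omega
    have hle1 : ∀ i, 1 ≤ i → i ≤ m - 1 → n i ≤ d i := by
      intro i h1 h2
      rcases Nat.lt_or_ge i 2 with h | h
      · have hi : i = 1 := by omega
        rw [hi, hn1]
      · obtain ⟨j, rfl⟩ : ∃ j, i = j + 1 := ⟨i - 1, by omega⟩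
        have := hrec j (by omega) (by omega)
        omega
    have hle2 : ∀ i, 1 ≤ i → i ≤ m - 1 → n i ≤ d (i + 1) := by
      intro i h1 h2
      rcases Nat.lt_or_ge i (m - 1) with h | h
      · have := hrec i h1 (by omega); omega
      · have hi : i = m - 1 := by omega
        rw [hi, hlast, show m - 1 + 1 = m by omega]
    refine ⟨fun i => shiftMap K (d i) (d (i + 1)) (n i), ?_, ?_, ?_⟩
    · show Function.Injective (shiftMap K (d 1) (d (1 + 1)) (n 1))
      rw [hn1]
      exact shiftMap_injective (by have := hle2 1 (by omega) (by omega); omega)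
    · show Function.Surjective (shiftMap K (d (m - 1)) (d (m - 1 + 1)) (n (m - 1)))
      have hb : n (m - 1) = d (m - 1 + 1) := by
        rw [show m - 1 + 1 = m by omega]; exact hlast
      rw [hb]
      exact shiftMap_surjective (by rw [← hb]; exact hle1 (m - 1) (by omega) le_rfl)
    · intro i h1 h2
      ext y
      rw [shiftMap_mem_range (hle1 i h1 (by omega)) (hle2 i h1 (by omega)),
        shiftMap_mem_ker (hle1 (i + 1) (by omega) (by omega))
          (hle2 (i + 1) (by omega) (by omega)),
        show d (i + 1) - n (i + 1) = n i from by
          have := hrec i h1 h2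
          have := hle2 i h1 (by omega)
          omega]
end

section
/- Let H(1), H(2), H(3), H(4) be 2 × 2 complex Hermitian matrices with eigenvalues λ(1), λ(2), λ(3), λ(4) respectively (each listed in weakly decreasing order λ_1(i) ≥ λ_2(i)), satisfying H(2) + H(4) = H(1) + H(3) and H(2) − H(1) positive semidefinite. Then λ_2(2) + λ_1(4) ≤ λ_1(1) + λ_1(3) and λ_1(2) + λ_2(4) ≤ λ_1(1) + λ_1(3). -/
open Matrix Polynomial
open scoped ComplexOrder

section AuxHerm2

variable {M : Matrix (Fin 2) (Fin 2) ℂ}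

private lemma aux_cayley {a b : ℝ} (hch : M.charpoly = (X - C (a:ℂ)) * (X - C (b:ℂ))) :
    (M - (a:ℂ) • 1) * (M - (b:ℂ) • 1) = 0 := by
  have h := Matrix.aeval_self_charpoly M
  rw [hch] at h
  simpa [Algebra.algebraMap_eq_smul_one] using h

private lemma aux_eigvec (hM : M.IsHermitian) (j : Fin 2) :
    ∃ v : Fin 2 → ℂ, v ≠ 0 ∧ M *ᵥ v = ((hM.eigenvalues j : ℝ) : ℂ) • v := by
  refine ⟨⇑(hM.eigenvectorBasis j), ?_, ?_⟩
  · intro h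
    apply hM.eigenvectorBasis.orthonormal.ne_zero j
    ext i
    exact congrFun h i
  · have h := hM.mulVec_eigenvectorBasis j
    funext i
    have := congrFun h i
    simpa [Complex.real_smul] using this

private lemma aux_eig_mem (hM : M.IsHermitian) {a b : ℝ}
    (hch : M.charpoly = (X - C (a:ℂ)) * (X - C (b:ℂ))) (j : Fin 2) :
    hM.eigenvalues j = a ∨ hM.eigenvalues j = b := by
  set e : ℝ := hM.eigenvalues j with he
  obtain ⟨v, hvne, hv⟩ := aux_eigvec hM j
  have h1 : (M - (b:ℂ) • 1) *ᵥ v = ((e:ℂ) - b) • v := by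
    rw [sub_mulVec, hv, smul_mulVec, one_mulVec, ← sub_smul]
  have h2 : (M - (a:ℂ) • 1) *ᵥ (((e:ℂ) - b) • v) = (((e:ℂ) - a) * ((e:ℂ) - b)) • v := by
    rw [mulVec_smul, sub_mulVec, hv, smul_mulVec, one_mulVec, ← sub_smul, smul_smul,
      mul_comm]
  have h0 : (((e:ℂ) - a) * ((e:ℂ) - b)) • v = 0 := by
    have h := congrArg (fun N => N *ᵥ v) (aux_cayley hch)
    simp only [← mulVec_mulVec, h1, h2, zero_mulVec] at h
    exact h
  rcases smul_eq_zero.mp h0 with h | h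
  · rcases mul_eq_zero.mp h with h | h
    · left; have : (e:ℂ) = a := by linear_combination h
      exact_mod_cast this
    · right; have : (e:ℂ) = b := by linear_combination h
      exact_mod_cast this
  · exact absurd h hvne

private lemma aux_trace (hM : M.IsHermitian) {a b : ℝ}
    (hch : M.charpoly = (X - C (a:ℂ)) * (X - C (b:ℂ))) :
    hM.eigenvalues 0 + hM.eigenvalues 1 = a + b := by
  have htr : M.trace = (a:ℂ) + b := by
    have h := Matrix.trace_eq_neg_charpoly_coeff M
    rw [hch] at h
    have hcard : Fintype.card (Fin 2) - 1 = 1 := rfl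
    rw [hcard] at h
    have hexp : (X - C (a:ℂ)) * (X - C (b:ℂ))
        = X^2 - (C ((a:ℂ) + b)) * X + C ((a:ℂ)*b) := by
      simp only [C_add, C_mul]; ring
    rw [hexp] at h
    simp [coeff_one] at h
    rw [h]
  have htr2 : M.trace = ((hM.eigenvalues 0 : ℂ)) + hM.eigenvalues 1 := by
    have hU := (Matrix.mem_unitaryGroup_iff'.mp hM.eigenvectorUnitary.2)
    calc M.trace = ((hM.eigenvectorUnitary : Matrix (Fin 2) (Fin 2) ℂ) *
          diagonal (RCLike.ofReal ∘ hM.eigenvalues) *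
          (star hM.eigenvectorUnitary : Matrix (Fin 2) (Fin 2) ℂ)).trace := by
          exact congrArg Matrix.trace hM.spectral_theorem
      _ = (((star hM.eigenvectorUnitary : Matrix (Fin 2) (Fin 2) ℂ)) *
          ((hM.eigenvectorUnitary : Matrix (Fin 2) (Fin 2) ℂ)) *
          diagonal (RCLike.ofReal ∘ hM.eigenvalues)).trace := by
          rw [Matrix.trace_mul_cycle]
      _ = (diagonal (RCLike.ofReal ∘ hM.eigenvalues)).trace := by rw [hU, one_mul]
      _ = _ := by simp [Matrix.trace, Fin.sum_univ_two]
  rw [htr2] at htr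
  exact_mod_cast htr

private lemma aux_conj_diag (hM : M.IsHermitian) (c : ℝ) :
    (c:ℂ) • 1 - M = (hM.eigenvectorUnitary : Matrix (Fin 2) (Fin 2) ℂ) *
      diagonal (fun j => ((c - hM.eigenvalues j : ℝ) : ℂ)) *
      (hM.eigenvectorUnitary : Matrix (Fin 2) (Fin 2) ℂ)ᴴ := by
  have hU := (Matrix.mem_unitaryGroup_iff.mp hM.eigenvectorUnitary.2)
  have hdiag : diagonal (fun j => ((c - hM.eigenvalues j : ℝ) : ℂ))
      = (c:ℂ) • 1 - diagonal (RCLike.ofReal ∘ hM.eigenvalues) := by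
    ext i j
    rcases eq_or_ne i j with h | h
    · subst h; push_cast; simp [Matrix.diagonal]
    · simp [Matrix.diagonal, h]
  rw [hdiag, mul_sub, sub_mul]
  congr 1
  · rw [mul_smul_comm, smul_mul_assoc, mul_one, ← Matrix.star_eq_conjTranspose, hU]
  · rw [← Matrix.star_eq_conjTranspose]
    exact hM.spectral_theorem

private lemma aux_conj_diag' (hM : M.IsHermitian) (c : ℝ) :
    M - (c:ℂ) • 1 = (hM.eigenvectorUnitary : Matrix (Fin 2) (Fin 2) ℂ) *
      diagonal (fun j => ((hM.eigenvalues j - c : ℝ) : ℂ)) *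
      (hM.eigenvectorUnitary : Matrix (Fin 2) (Fin 2) ℂ)ᴴ := by
  have h := aux_conj_diag hM c
  have hneg : M - (c:ℂ) • 1 = -((c:ℂ) • 1 - M) := (neg_sub _ _).symm
  have hd : (diagonal fun j => ((hM.eigenvalues j - c : ℝ) : ℂ))
      = -(diagonal fun j => ((c - hM.eigenvalues j : ℝ) : ℂ)) := by
    ext i j
    rcases eq_or_ne i j with hij | hij
    · subst hij
      simp only [Matrix.diagonal_apply_eq, Matrix.neg_apply]
      push_cast
      ring
    · simp [Matrix.diagonal_apply_ne _ hij, hij]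
  rw [hneg, h, hd, Matrix.mul_neg, Matrix.neg_mul]

/-- Main per-matrix lemma: eigenvector for the top eigenvalue, and the two PSD bounds. -/
private lemma aux_main (hM : M.IsHermitian) {a b : ℝ} (hab : b ≤ a)
    (hch : M.charpoly = (X - C (a:ℂ)) * (X - C (b:ℂ))) :
    (∃ v : Fin 2 → ℂ, v ≠ 0 ∧ M *ᵥ v = (a:ℂ) • v) ∧
    ((a:ℂ) • 1 - M).PosSemidef ∧ (M - (b:ℂ) • 1).PosSemidef := by
  have hmem := aux_eig_mem hM hch
  have hsum := aux_trace hM hch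
  have hle : ∀ j, b ≤ hM.eigenvalues j ∧ hM.eigenvalues j ≤ a := by
    intro j
    rcases hmem j with h | h <;> rw [h] <;> exact ⟨by linarith, by linarith⟩
  refine ⟨?_, ?_, ?_⟩
  · have hj : ∃ j, hM.eigenvalues j = a := by
      rcases hmem 0 with h | h
      · exact ⟨0, h⟩
      · exact ⟨1, by linarith⟩
    obtain ⟨j, hj⟩ := hj
    obtain ⟨v, hvne, hv⟩ := aux_eigvec hM j
    exact ⟨v, hvne, by rw [hv, hj]⟩
  · rw [aux_conj_diag hM a]
    exact (posSemidef_diagonal_iff.mpr fun j =>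
      Complex.zero_le_real.mpr (by linarith [(hle j).2])).mul_mul_conjTranspose_same _
  · rw [aux_conj_diag' hM b]
    exact (posSemidef_diagonal_iff.mpr fun j =>
      Complex.zero_le_real.mpr (by linarith [(hle j).1])).mul_mul_conjTranspose_same _

private lemma aux_rayleigh {N : Matrix (Fin 2) (Fin 2) ℂ} (hN : N.PosSemidef) {v : Fin 2 → ℂ}
    (hv : v ≠ 0) {z : ℝ} (hz : N *ᵥ v = (z:ℂ) • v) : 0 ≤ z := by
  have h := hN.dotProduct_mulVec_nonneg v
  rw [hz] at h
  have hs : 0 < dotProduct (star v) v := Matrix.dotProduct_star_self_pos_iff.mpr hv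
  rw [dotProduct_smul, smul_eq_mul] at h
  have hre := (Complex.le_def.mp h).1
  have hsre := (Complex.lt_def.mp hs).1
  have hsim := (Complex.lt_def.mp hs).2
  simp [Complex.mul_re, ← hsim] at hre
  simp at hsre
  nlinarith

end AuxHerm2

/-- Let `H 0, H 1, H 2, H 3` be `2 × 2` Hermitian matrices (playing the roles of
`H(1), H(2), H(3), H(4)`) with eigenvalues `a i ≥ b i`, satisfying
`H(2) + H(4) = H(1) + H(3)` and `H(2) − H(1)` positive semidefinite. Then
`λ₂(2) + λ₁(4) ≤ λ₁(1) + λ₁(3)` and `λ₁(2) + λ₂(4) ≤ λ₁(1) + λ₁(3)`. -/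
theorem hermitian_2x2_inequalities
    (H : Fin 4 → Matrix (Fin 2) (Fin 2) ℂ)
    (hHerm : ∀ i, (H i).IsHermitian)
    (a b : Fin 4 → ℝ) (hab : ∀ i, b i ≤ a i)
    (hch : ∀ i, (H i).charpoly = (X - C ((a i : ℂ))) * (X - C ((b i : ℂ))))
    (heq : H 1 + H 3 = H 0 + H 2)
    (hpsd : (H 1 - H 0).PosSemidef) :
    b 1 + a 3 ≤ a 0 + a 2 ∧ a 1 + b 3 ≤ a 0 + a 2 := by
  have key := fun i => aux_main (hHerm i) (hab i) (hch i)
  constructor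
  · obtain ⟨v, hvne, hv⟩ := (key 3).1
    have hP : ((((a 0 : ℂ) • 1 - H 0) + ((a 2 : ℂ) • 1 - H 2)) + (H 1 - (b 1 : ℂ) • 1)).PosSemidef :=
      ((key 0).2.1.add (key 2).2.1).add (key 1).2.2
    have hNeq : (((a 0 : ℂ) • 1 - H 0) + ((a 2 : ℂ) • 1 - H 2)) + (H 1 - (b 1 : ℂ) • 1)
        = ((a 0 + a 2 - b 1 : ℝ) : ℂ) • 1 - H 3 := by
      have h3 : H 1 = H 0 + H 2 - H 3 := by rw [← heq]; abel
      rw [h3]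
      push_cast
      module
    rw [hNeq] at hP
    have hNv : (((a 0 + a 2 - b 1 : ℝ) : ℂ) • 1 - H 3) *ᵥ v
        = ((a 0 + a 2 - b 1 - a 3 : ℝ) : ℂ) • v := by
      rw [sub_mulVec, smul_mulVec, one_mulVec, hv, ← sub_smul]
      norm_cast
    have := aux_rayleigh hP hvne hNv
    linarith
  · obtain ⟨v, hvne, hv⟩ := (key 1).1
    have hP : ((((a 0 : ℂ) • 1 - H 0) + ((a 2 : ℂ) • 1 - H 2)) + (H 3 - (b 3 : ℂ) • 1)).PosSemidef :=
      ((key 0).2.1.add (key 2).2.1).add (key 3).2.2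
    have hNeq : (((a 0 : ℂ) • 1 - H 0) + ((a 2 : ℂ) • 1 - H 2)) + (H 3 - (b 3 : ℂ) • 1)
        = ((a 0 + a 2 - b 3 : ℝ) : ℂ) • 1 - H 1 := by
      have h3 : H 3 = H 0 + H 2 - H 1 := by rw [← heq]; abel
      rw [h3]
      push_cast
      module
    rw [hNeq] at hP
    have hNv : (((a 0 + a 2 - b 3 : ℝ) : ℂ) • 1 - H 1) *ᵥ v
        = ((a 0 + a 2 - b 3 - a 1 : ℝ) : ℂ) • v := by
      rw [sub_mulVec, smul_mulVec, one_mulVec, hv, ← sub_smul]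
      norm_cast
    have := aux_rayleigh hP hvne hNv
    linarith
end

section
/- There do NOT exist 2 × 2 complex Hermitian matrices H(1), H(2), H(3), H(4) with eigenvalue pairs (2,1), (3,1), (4,1), (2,2) respectively, such that H(2) + H(4) = H(1) + H(3) and H(2) − H(1) is positive semidefinite — even though the data λ(1)=(2,1), λ(2)=(3,1), λ(3)=(4,1), λ(4)=(2,2) satisfies the trace identity |λ(2)|+|λ(4)| = |λ(1)|+|λ(3)| and the eigenvalue inequalities λ_2(2)+λ_1(4) ≤ λ_1(1)+λ_1(3), λ_1(2)+λ_2(4) ≤ λ_1(1)+λ_1(3), λ_2(2)+λ_2(4) ≤ λ_2(1)+λ_1(3), λ_2(2)+λ_2(4) ≤ λ_1(1)+λ_2(3), λ_1(1) ≤ λ_1(2), and λ_2(1) ≤ λ_2(2). -/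
open Matrix Polynomial
open scoped ComplexOrder


lemma eval_charpoly_det {n : ℕ} (M : Matrix (Fin n) (Fin n) ℂ) (k : ℂ) :
    M.charpoly.eval k = (k • (1 : Matrix (Fin n) (Fin n) ℂ) - M).det := by
  rw [Matrix.charpoly, ← Polynomial.coe_evalRingHom, RingHom.map_det]
  congr 1
  ext i j
  by_cases h : i = j <;>
    simp [h, Matrix.charmatrix_apply, Matrix.one_apply, Matrix.diagonal_apply]

theorem no_hermitian_solution_aux :
    (¬ ∃ H : Fin 4 → Matrix (Fin 2) (Fin 2) ℂ,
      (∀ i, (H i).IsHermitian) ∧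
      (H 0).charpoly = (X - C 2) * (X - C 1) ∧
      (H 1).charpoly = (X - C 3) * (X - C 1) ∧
      (H 2).charpoly = (X - C 4) * (X - C 1) ∧
      (H 3).charpoly = (X - C 2) * (X - C 2) ∧
      H 1 + H 3 = H 0 + H 2 ∧
      (H 1 - H 0).PosSemidef) := by
  rintro ⟨H, hHerm, c0, c1, c2, c3, heq, hpsd⟩
  -- Step 1: H 3 = 2 • 1
  have hc := Matrix.aeval_self_charpoly (H 3)
  rw [c3] at hc
  have hc' : (H 3 - (2:ℂ) • 1) * (H 3 - (2:ℂ) • 1) = 0 := by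
    simpa [_root_.map_mul, map_sub, aeval_X, aeval_C, Algebra.algebraMap_eq_smul_one] using hc
  have hA : (H 3 - (2:ℂ) • 1).IsHermitian := by
    refine (hHerm 3).sub ?_
    unfold Matrix.IsHermitian
    rw [Matrix.conjTranspose_smul, Matrix.conjTranspose_one]
    norm_num
  have h3 : H 3 = (2:ℂ) • 1 :=
    sub_eq_zero.mp (Matrix.conjTranspose_mul_self_eq_zero.mp (by rw [hA]; exact hc'))
  -- Step 2: H 1 - H 0 = H 2 - 2 • 1
  have key : H 1 - H 0 = H 2 - (2:ℂ) • 1 := by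
    rw [sub_eq_sub_iff_add_eq_add, ← h3, heq, add_comm]
  -- Step 3: eigenvector of H 2 with eigenvalue 1
  have hdet : ((1:ℂ) • (1 : Matrix (Fin 2) (Fin 2) ℂ) - H 2).det = 0 := by
    rw [← eval_charpoly_det, c2]
    simp
  obtain ⟨v, hv0, hv⟩ := (Matrix.exists_mulVec_eq_zero_iff).mpr hdet
  have hv' : H 2 *ᵥ v = v := by
    have h2 : v - H 2 *ᵥ v = 0 := by simpa [Matrix.sub_mulVec] using hv
    exact (sub_eq_zero.mp h2).symm
  -- Step 4: contradiction with PSD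
  have hle := hpsd.dotProduct_mulVec_nonneg v
  rw [key] at hle
  have hmv : (H 2 - (2:ℂ) • 1) *ᵥ v = -v := by
    rw [Matrix.sub_mulVec, hv', Matrix.smul_mulVec]
    simp
    module
  rw [hmv, dotProduct_neg] at hle
  have hnn := dotProduct_star_self_nonneg v
  have hz : dotProduct (star v) v = 0 := le_antisymm (neg_nonneg.mp hle) hnn
  exact hv0 (dotProduct_star_self_eq_zero.mp hz)

/-- There are no `2 × 2` complex Hermitian matrices `H(1), H(2), H(3), H(4)` with
eigenvalue pairs `(2,1), (3,1), (4,1), (2,2)` respectively satisfying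
`H(2) + H(4) = H(1) + H(3)` and `H(2) − H(1)` positive semidefinite — even though
the eigenvalue data satisfies the trace identity and the listed Horn type
inequalities. -/
theorem no_hermitian_solution_example :
    (¬ ∃ H : Fin 4 → Matrix (Fin 2) (Fin 2) ℂ,
      (∀ i, (H i).IsHermitian) ∧
      (H 0).charpoly = (X - C 2) * (X - C 1) ∧
      (H 1).charpoly = (X - C 3) * (X - C 1) ∧
      (H 2).charpoly = (X - C 4) * (X - C 1) ∧
      (H 3).charpoly = (X - C 2) * (X - C 2) ∧
      H 1 + H 3 = H 0 + H 2 ∧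
      (H 1 - H 0).PosSemidef) ∧
    -- the trace identity |λ(2)| + |λ(4)| = |λ(1)| + |λ(3)|
    ((3 + 1 : ℤ) + (2 + 2) = (2 + 1) + (4 + 1)) ∧
    -- λ₂(2) + λ₁(4) ≤ λ₁(1) + λ₁(3)
    ((1 + 2 : ℤ) ≤ 2 + 4) ∧
    -- λ₁(2) + λ₂(4) ≤ λ₁(1) + λ₁(3)
    ((3 + 2 : ℤ) ≤ 2 + 4) ∧
    -- λ₂(2) + λ₂(4) ≤ λ₂(1) + λ₁(3)
    ((1 + 2 : ℤ) ≤ 1 + 4) ∧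
    -- λ₂(2) + λ₂(4) ≤ λ₁(1) + λ₂(3)
    ((1 + 2 : ℤ) ≤ 2 + 1) ∧
    -- λ₁(1) ≤ λ₁(2)
    ((2 : ℤ) ≤ 3) ∧
    -- λ₂(1) ≤ λ₂(2)
    ((1 : ℤ) ≤ 1) := by
  exact ⟨no_hermitian_solution_aux, by norm_num, by norm_num, by norm_num,
    by norm_num, by norm_num, by norm_num, le_refl 1⟩
end

section
/- Let p be a prime, m ≥ 3, and d_1, …, d_m positive integers. There exists an exact sequence of abelian groups 0 → (ℤ/p)^{d_1} → (ℤ/p)^{d_2} → ⋯ → (ℤ/p)^{d_m} → 0 if and only if there exists an exact sequence of abelian groups 0 → ℤ/p^{d_1} → ℤ/p^{d_2} → ⋯ → ℤ/p^{d_m} → 0. -/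
lemma numcond_of_exact (p : ℕ) (hp : p.Prime) (m : ℕ) (hm : 3 ≤ m) (d : ℕ → ℕ)
    {G : ℕ → Type} [∀ i, AddCommGroup (G i)] [∀ i, Finite (G i)]
    (hcard : ∀ i, 1 ≤ i → i ≤ m → Nat.card (G i) = p ^ d i)
    (f : ∀ i, G i →+ G (i + 1))
    (hinj : Function.Injective (f 1)) (hsurj : Function.Surjective (f (m - 1)))
    (hex : ∀ i, 1 ≤ i → i ≤ m - 2 → (f i).range = (f (i + 1)).ker) :
    ∃ r : ℕ → ℕ, r 1 = d 1 ∧ r (m - 1) = d m ∧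
      ∀ i, 1 ≤ i → i ≤ m - 2 → r i + r (i + 1) = d (i + 1) := by
  set n : ℕ → ℕ := fun i => Nat.card ((f i).range) with hn
  -- card splitting
  have hsplit : ∀ i, Nat.card (G i) = Nat.card (G i ⧸ (f i).ker) * Nat.card ((f i).ker) :=
    fun i => AddSubgroup.card_eq_card_quotient_mul_card_addSubgroup _
  have hquot : ∀ i, Nat.card (G i ⧸ (f i).ker) = n i := fun i =>
    Nat.card_congr (QuotientAddGroup.quotientKerEquivRange (f i)).toEquiv
  have hsplit' : ∀ i, 1 ≤ i → i ≤ m - 1 → p ^ d i = n i * Nat.card ((f i).ker) := by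
    intro i h1 h2
    rw [← hcard i h1 (by omega), hsplit i, hquot i]
  have hdvd : ∀ i, 1 ≤ i → i ≤ m - 1 → n i ∣ p ^ d i := by
    intro i h1 h2; exact ⟨_, hsplit' i h1 h2⟩
  set r : ℕ → ℕ := fun i => Nat.log p (n i) with hr
  have hpow : ∀ i, 1 ≤ i → i ≤ m - 1 → p ^ r i = n i := by
    intro i h1 h2
    obtain ⟨k, hk, hkk⟩ := (Nat.dvd_prime_pow hp).mp (hdvd i h1 h2)
    rw [hr]; simp only [hkk, Nat.log_pow hp.one_lt]
  have hpinj : Function.Injective (p ^ ·) := Nat.pow_right_injective hp.two_le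
  refine ⟨r, ?_, ?_, ?_⟩
  · -- r 1 = d 1
    have hker : (f 1).ker = ⊥ := by
      rwa [AddMonoidHom.ker_eq_bot_iff]
    have : p ^ d 1 = n 1 * 1 := by
      rw [hsplit' 1 le_rfl (by omega), hker]; simp
    apply hpinj
    simp only [hpow 1 le_rfl (by omega), this, mul_one]
  · -- r (m-1) = d m
    have hrange : (f (m - 1)).range = ⊤ := AddMonoidHom.range_eq_top.mpr hsurj
    have : n (m - 1) = p ^ d m := by
      rw [hn]; simp only [hrange]
      have hm1 : m - 1 + 1 = m := by omega
      rw [Nat.card_congr AddSubgroup.topEquiv.toEquiv]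
      simp only [hm1]
      exact hcard m (by omega) le_rfl
    apply hpinj
    simp only [hpow (m - 1) (by omega) (by omega), this]
  · intro i h1 h2
    have hkv : Nat.card ((f (i + 1)).ker) = n i := by
      rw [← hex i h1 h2]
    have : p ^ d (i + 1) = n (i + 1) * n i := by
      rw [hsplit' (i + 1) (by omega) (by omega), hkv]
    apply hpinj
    simp only [pow_add, hpow i h1 (by omega), hpow (i + 1) (by omega) (by omega)]
    rw [this, mul_comm]

def elemMap (p a b r : ℕ) : (Fin a → ZMod p) →+ (Fin b → ZMod p) where
  toFun x j := if h : j.val < r ∧ a - r + j.val < a then x ⟨a - r + j.val, h.2⟩ else 0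
  map_zero' := by funext j; by_cases h : j.val < r ∧ a - r + j.val < a <;> simp [h]
  map_add' x y := by
    funext j; by_cases h : j.val < r ∧ a - r + j.val < a <;> simp [h]

lemma mem_ker_elemMap {p a b r : ℕ} (hra : r ≤ a) (hrb : r ≤ b) (x : Fin a → ZMod p) :
    x ∈ (elemMap p a b r).ker ↔ ∀ k : Fin a, a - r ≤ k.val → x k = 0 := by
  simp only [AddMonoidHom.mem_ker, elemMap, AddMonoidHom.coe_mk, ZeroHom.coe_mk, funext_iff]
  constructor
  · intro h k hk
    have hkr : k.val - (a - r) < r := by omega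
    have := h ⟨k.val - (a - r), by omega⟩
    rw [dif_pos (by simp only [Fin.val_mk]; omega)] at this
    convert this using 2
    ext
    simp only [Fin.val_mk]
    omega
    rfl
  · intro h j
    by_cases hj : j.val < r ∧ a - r + j.val < a
    · rw [dif_pos hj]
      exact h ⟨a - r + j.val, hj.2⟩ (by simp only [Fin.val_mk]; omega)
    · rw [dif_neg hj]; simp

lemma mem_range_elemMap {p a b r : ℕ} (hra : r ≤ a) (hrb : r ≤ b) (y : Fin b → ZMod p) :
    y ∈ (elemMap p a b r).range ↔ ∀ j : Fin b, r ≤ j.val → y j = 0 := by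
  constructor
  · rintro ⟨x, rfl⟩ j hj
    simp only [elemMap, AddMonoidHom.coe_mk, ZeroHom.coe_mk]
    rw [dif_neg (by omega)]
  · intro h
    refine ⟨fun k => if hk : a - r ≤ k.val ∧ k.val - (a - r) < b then y ⟨k.val - (a - r), hk.2⟩ else 0, ?_⟩
    funext j
    simp only [elemMap, AddMonoidHom.coe_mk, ZeroHom.coe_mk]
    by_cases hj : j.val < r ∧ a - r + j.val < a
    · have hc : a - r ≤ (⟨a - r + j.val, hj.2⟩ : Fin a).val ∧
          (⟨a - r + j.val, hj.2⟩ : Fin a).val - (a - r) < b := by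
        simp only [Fin.val_mk]; omega
      rw [dif_pos hj, dif_pos hc]
      congr 1
      ext
      simp only [Fin.val_mk]
      omega
    · rw [dif_neg hj]
      exact (h j (by omega)).symm

def cycMap (p a b r : ℕ) : ZMod (p ^ a) →+ ZMod (p ^ b) :=
  ZMod.lift (p ^ a)
    ⟨zmultiplesHom (ZMod (p ^ b)) ((p : ZMod (p ^ b)) ^ (b - min r (min a b))), by
      have hs : min r (min a b) ≤ a := le_trans (min_le_right _ _) (min_le_left _ _)
      have hs' : min r (min a b) ≤ b := le_trans (min_le_right _ _) (min_le_right _ _)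
      simp only [zmultiplesHom_apply, Nat.cast_pow, zsmul_eq_mul]
      push_cast
      rw [← pow_add]
      have : a + (b - min r (min a b)) = (a - min r (min a b)) + b := by omega
      rw [this, pow_add]
      have hb : ((p : ZMod (p ^ b))) ^ b = 0 := by
        rw [← Nat.cast_pow, ZMod.natCast_self]
      rw [hb, mul_zero]⟩

lemma cycMap_intCast (p a b r : ℕ) (k : ℤ) :
    cycMap p a b r (k : ZMod (p ^ a)) = (k : ZMod (p ^ b)) * (p : ZMod (p ^ b)) ^ (b - min r (min a b)) := by
  rw [cycMap, ZMod.lift_coe]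
  simp [zsmul_eq_mul]

lemma cycMap_intCast' {p a b r : ℕ} (hra : r ≤ a) (hrb : r ≤ b) (k : ℤ) :
    cycMap p a b r (k : ZMod (p ^ a)) = (k : ZMod (p ^ b)) * (p : ZMod (p ^ b)) ^ (b - r) := by
  rw [cycMap_intCast]
  congr 2
  omega

lemma range_cycMap {p a b r : ℕ} (hra : r ≤ a) (hrb : r ≤ b) :
    (cycMap p a b r).range = AddSubgroup.zmultiples ((p : ZMod (p ^ b)) ^ (b - r)) := by
  ext y
  simp only [AddMonoidHom.mem_range, AddSubgroup.mem_zmultiples_iff]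
  constructor
  · rintro ⟨x, rfl⟩
    obtain ⟨k, rfl⟩ := ZMod.intCast_surjective x
    exact ⟨k, by rw [cycMap_intCast' hra hrb, zsmul_eq_mul]⟩
  · rintro ⟨z, rfl⟩
    exact ⟨(z : ZMod (p ^ a)), by rw [cycMap_intCast' hra hrb, zsmul_eq_mul]⟩

lemma ker_cycMap {p a b r : ℕ} (hp : 0 < p) (hra : r ≤ a) (hrb : r ≤ b) :
    (cycMap p a b r).ker = AddSubgroup.zmultiples ((p : ZMod (p ^ a)) ^ r) := by
  have hpne : ((p : ℤ) ^ (b - r)) ≠ 0 := pow_ne_zero _ (by exact_mod_cast hp.ne')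
  ext x
  obtain ⟨k, rfl⟩ := ZMod.intCast_surjective x
  simp only [AddMonoidHom.mem_ker, AddSubgroup.mem_zmultiples_iff]
  rw [cycMap_intCast' hra hrb]
  have key : (k : ZMod (p ^ b)) * (p : ZMod (p ^ b)) ^ (b - r) = 0 ↔ ((p : ℤ) ^ r) ∣ k := by
    have : (k : ZMod (p ^ b)) * (p : ZMod (p ^ b)) ^ (b - r)
        = ((k * (p : ℤ) ^ (b - r) : ℤ) : ZMod (p ^ b)) := by push_cast; ring
    rw [this, ZMod.intCast_zmod_eq_zero_iff_dvd]
    have hsplit : ((p ^ b : ℕ) : ℤ) = (p : ℤ) ^ r * (p : ℤ) ^ (b - r) := by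
      push_cast
      rw [← pow_add]
      congr 1
      omega
    rw [hsplit]
    exact mul_dvd_mul_iff_right hpne
  rw [key]
  constructor
  · rintro ⟨t, rfl⟩
    exact ⟨t, by push_cast; rw [zsmul_eq_mul]; ring⟩
  · rintro ⟨z, hz⟩
    have : ((k : ZMod (p ^ a))) = ((z * (p : ℤ) ^ r : ℤ) : ZMod (p ^ a)) := by
      rw [← hz, zsmul_eq_mul]; push_cast; ring
    rw [ZMod.intCast_eq_intCast_iff] at this
    have hdvd : ((p : ℤ) ^ a) ∣ (z * (p : ℤ) ^ r - k) := by
      have := Int.ModEq.dvd this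
      push_cast at this
      exact this
    have h1 : ((p : ℤ) ^ r) ∣ (z * (p : ℤ) ^ r - k) :=
      dvd_trans (pow_dvd_pow _ hra) hdvd
    have h2 : ((p : ℤ) ^ r) ∣ z * (p : ℤ) ^ r := Dvd.intro z (mul_comm _ _)
    have hk : k = z * (p : ℤ) ^ r - (z * (p : ℤ) ^ r - k) := by ring
    rw [hk]
    exact dvd_sub h2 h1

section Construct

variable {p m : ℕ} {d : ℕ → ℕ}

lemma bounds_of_numcond (hm : 3 ≤ m) {r : ℕ → ℕ}
    (hr1 : r 1 = d 1) (hrm : r (m - 1) = d m)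
    (hrsum : ∀ i, 1 ≤ i → i ≤ m - 2 → r i + r (i + 1) = d (i + 1)) :
    ∀ i, 1 ≤ i → i ≤ m - 1 → r i ≤ d i ∧ r i ≤ d (i + 1) := by
  intro i h1 h2
  constructor
  · rcases Nat.eq_or_lt_of_le h1 with h | h
    · rw [← h, hr1]
    · have e : i - 1 + 1 = i := by omega
      have := hrsum (i - 1) (by omega) (by omega)
      rw [e] at this
      omega
  · rcases eq_or_ne i (m - 1) with h | h
    · have e : i + 1 = m := by omega
      rw [e, ← hrm, h]
    · have := hrsum i h1 (by omega)
      omega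

lemma elem_of_numcond (hp : p.Prime) (hm : 3 ≤ m) {r : ℕ → ℕ}
    (hr1 : r 1 = d 1) (hrm : r (m - 1) = d m)
    (hrsum : ∀ i, 1 ≤ i → i ≤ m - 2 → r i + r (i + 1) = d (i + 1)) :
    ∃ f : (i : ℕ) → ((Fin (d i) → ZMod p) →+ (Fin (d (i + 1)) → ZMod p)),
      Function.Injective (f 1) ∧ Function.Surjective (f (m - 1)) ∧
      ∀ i, 1 ≤ i → i ≤ m - 2 → AddMonoidHom.range (f i) = AddMonoidHom.ker (f (i + 1)) := by
  have hb := bounds_of_numcond hm hr1 hrm hrsum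
  refine ⟨fun i => elemMap p (d i) (d (i + 1)) (r i), ?_, ?_, ?_⟩
  · rw [injective_iff_map_eq_zero]
    intro x hx
    funext k
    exact (mem_ker_elemMap (hb 1 le_rfl (by omega)).1 (hb 1 le_rfl (by omega)).2 x).mp hx k
      (by omega)
  · intro y
    have hy : y ∈ (elemMap p (d (m - 1)) (d (m - 1 + 1)) (r (m - 1))).range := by
      rw [mem_range_elemMap (hb (m - 1) (by omega) le_rfl).1 (hb (m - 1) (by omega) le_rfl).2]
      intro j hj
      exfalso
      have hjlt := j.isLt
      have hdm : d (m - 1 + 1) = d m := by rw [(by omega : m - 1 + 1 = m)]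
      omega
    exact hy
  · intro i h1 h2
    ext y
    rw [mem_range_elemMap (hb i h1 (by omega)).1 (hb i h1 (by omega)).2,
      mem_ker_elemMap (hb (i + 1) (by omega) (by omega)).1 (hb (i + 1) (by omega) (by omega)).2]
    have e : d (i + 1) - r (i + 1) = r i := by have := hrsum i h1 h2; omega
    rw [e]

lemma cyc_of_numcond (hp : p.Prime) (hm : 3 ≤ m) {r : ℕ → ℕ}
    (hr1 : r 1 = d 1) (hrm : r (m - 1) = d m)
    (hrsum : ∀ i, 1 ≤ i → i ≤ m - 2 → r i + r (i + 1) = d (i + 1)) :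
    ∃ g : (i : ℕ) → (ZMod (p ^ d i) →+ ZMod (p ^ d (i + 1))),
      Function.Injective (g 1) ∧ Function.Surjective (g (m - 1)) ∧
      ∀ i, 1 ≤ i → i ≤ m - 2 → AddMonoidHom.range (g i) = AddMonoidHom.ker (g (i + 1)) := by
  have hb := bounds_of_numcond hm hr1 hrm hrsum
  refine ⟨fun i => cycMap p (d i) (d (i + 1)) (r i), ?_, ?_, ?_⟩
  · rw [← AddMonoidHom.ker_eq_bot_iff,
      ker_cycMap hp.pos (hb 1 le_rfl (by omega)).1 (hb 1 le_rfl (by omega)).2, hr1]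
    have h0 : (p : ZMod (p ^ d 1)) ^ (d 1) = 0 := by
      rw [← Nat.cast_pow, ZMod.natCast_self]
    rw [h0]
    exact AddSubgroup.zmultiples_zero_eq_bot
  · intro y
    obtain ⟨k, rfl⟩ := ZMod.intCast_surjective y
    refine ⟨(k : ZMod (p ^ d (m - 1))), ?_⟩
    rw [cycMap_intCast' (hb (m - 1) (by omega) le_rfl).1 (hb (m - 1) (by omega) le_rfl).2]
    have e : d (m - 1 + 1) - r (m - 1) = 0 := by
      have e2 : m - 1 + 1 = m := by omega
      rw [e2]
      omega
    rw [e, pow_zero, mul_one]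
  · intro i h1 h2
    rw [range_cycMap (hb i h1 (by omega)).1 (hb i h1 (by omega)).2,
      ker_cycMap hp.pos (hb (i + 1) (by omega) (by omega)).1 (hb (i + 1) (by omega) (by omega)).2]
    have e : d (i + 1) - r i = r (i + 1) := by have := hrsum i h1 h2; omega
    rw [e]

end Construct

/-- For a prime `p`, `m ≥ 3` and positive integers `d 1, …, d m`, there is an
exact sequence of abelian groups `0 → (ℤ/p)^{d 1} → ⋯ → (ℤ/p)^{d m} → 0` if and
only if there is an exact sequence of abelian groups
`0 → ℤ/p^{d 1} → ⋯ → ℤ/p^{d m} → 0`. -/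
theorem exact_sequence_elementary_iff_cyclic (p : ℕ) (hp : p.Prime)
    (m : ℕ) (hm : 3 ≤ m) (d : ℕ → ℕ) (hd : ∀ i, 1 ≤ i → i ≤ m → 0 < d i) :
    (∃ f : (i : ℕ) → ((Fin (d i) → ZMod p) →+ (Fin (d (i + 1)) → ZMod p)),
        Function.Injective (f 1) ∧ Function.Surjective (f (m - 1)) ∧
        ∀ i, 1 ≤ i → i ≤ m - 2 → AddMonoidHom.range (f i) = AddMonoidHom.ker (f (i + 1)))
      ↔
    (∃ g : (i : ℕ) → (ZMod (p ^ d i) →+ ZMod (p ^ d (i + 1))),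
        Function.Injective (g 1) ∧ Function.Surjective (g (m - 1)) ∧
        ∀ i, 1 ≤ i → i ≤ m - 2 → AddMonoidHom.range (g i) = AddMonoidHom.ker (g (i + 1))) := by
  haveI : NeZero p := ⟨hp.pos.ne'⟩
  haveI hfin : ∀ i, Finite (ZMod (p ^ d i)) := fun i => by
    haveI : NeZero (p ^ d i) := ⟨pow_ne_zero _ hp.pos.ne'⟩
    infer_instance
  constructor
  · rintro ⟨f, hinj, hsurj, hex⟩
    obtain ⟨r, hr1, hrm, hrsum⟩ :=
      numcond_of_exact p hp m hm d (G := fun i => Fin (d i) → ZMod p)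
        (fun i _ _ => by
          simp [Nat.card_fun, Nat.card_zmod, Nat.card_eq_fintype_card])
        f hinj hsurj hex
    exact cyc_of_numcond hp hm hr1 hrm hrsum
  · rintro ⟨g, hinj, hsurj, hex⟩
    obtain ⟨r, hr1, hrm, hrsum⟩ :=
      numcond_of_exact p hp m hm d (G := fun i => ZMod (p ^ d i))
        (fun i _ _ => by simp [Nat.card_zmod]) g hinj hsurj hex
    exact elem_of_numcond hp hm hr1 hrm hrsum
end
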